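/- arXiv:1207.0410 — 7 statements merged into one kernel-verified Lean document; each statement's English description precedes it below -/
import Mathlib

section
/- Let ℓ² be the real Hilbert space of square-summable real sequences, let g = (g_k)_{k∈ℕ} be a bounded real sequence with g_k > 0 for every k, and define p : ℓ² → ℝ by p(s) = Σ_{k=1}^{∞} g_k s_k². Then p is not a Riss polynomial on ℓ² with the discrete topology: there do not exist finitely many additive group homomorphisms α_1, …, α_N : ℓ² → ℝ and a real polynomial Q ∈ ℝ[x_1, …, x_N] such that p(s) = Q(α_1(s), …, α_N(s)) for all s ∈ ℓ². -/
open scoped BigOperators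

/-- if `g` is a bounded real sequence with `g k > 0` for all `k`, the
degree-two polynomial `p s = ∑' k, g k * (s k)^2` on `ℓ²` (with the discrete topology)
is not a Riss polynomial: it is not of the form `Q (α₁ s, …, α_N s)` for a real
polynomial `Q` and additive group homomorphisms `α_i : ℓ² → ℝ`. -/
theorem lp_two_quadratic_not_riss
    (g : ℕ → ℝ) (hg_pos : ∀ k, 0 < g k) (hg_bdd : ∃ C : ℝ, ∀ k, g k ≤ C)
    (p : lp (fun _ : ℕ => ℝ) 2 → ℝ)
    (hp : ∀ s : lp (fun _ : ℕ => ℝ) 2, p s = ∑' k : ℕ, g k * (s k) ^ 2) :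
    ¬ ∃ (N : ℕ) (α : Fin N → (lp (fun _ : ℕ => ℝ) 2 →+ ℝ)) (Q : MvPolynomial (Fin N) ℝ),
        ∀ s : lp (fun _ : ℕ => ℝ) 2, p s = MvPolynomial.eval (fun i => α i s) Q := by
  classical
  rintro ⟨N, α, Q, hQ⟩
  obtain ⟨C, hC⟩ := hg_bdd
  let e : ℕ → lp (fun _ : ℕ => ℝ) 2 := fun j => lp.single 2 j (1 : ℝ)
  -- summability of the quadratic series
  have hsum : ∀ s : lp (fun _ : ℕ => ℝ) 2, Summable (fun m => g m * (s m) ^ 2) := by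
    intro s
    have h2 : Summable (fun m => ‖s m‖ ^ (2 : ENNReal).toReal) :=
      (lp.memℓp s).summable (by norm_num)
    have h2' : Summable (fun m => (s m) ^ 2) := by
      have : (fun m => ‖s m‖ ^ (2 : ENNReal).toReal) = fun m => (s m) ^ 2 := by
        funext m
        rw [show ((2 : ENNReal).toReal) = ((2 : ℕ) : ℝ) by norm_num, Real.rpow_natCast,
          Real.norm_eq_abs, sq_abs]
      rwa [this] at h2
    refine Summable.of_nonneg_of_le (fun m => ?_) (fun m => ?_) (h2'.mul_left C)
    · exact mul_nonneg (hg_pos m).le (sq_nonneg _)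
    · exact mul_le_mul_of_nonneg_right (hC m) (sq_nonneg _)
  -- coordinates of basis vectors
  have he_self : ∀ j, (e j) j = 1 := by
    intro j; exact lp.single_apply_self (E := fun _ : ℕ => ℝ) 2 j (1:ℝ)
  have he_ne : ∀ j m, m ≠ j → (e j) m = 0 := by
    intro j m h; exact lp.single_apply_ne (E := fun _ : ℕ => ℝ) 2 j (1:ℝ) h
  -- p of a basis vector
  have hpe : ∀ k, p (e k) = g k := by
    intro k
    rw [hp]
    rw [tsum_eq_single k (fun m hm => by rw [he_ne k m hm]; ring)]
    rw [he_self k]; ring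
  -- key difference identity
  have key : ∀ (k : ℕ) (s : lp (fun _ : ℕ => ℝ) 2), p (s + e k) - p s - p (e k) = 2 * g k * s k := by
    intro k s
    have hadd : ∀ m, (s + e k) m = s m + (e k) m := fun m => by
      rw [lp.coeFn_add]; rfl
    set d : ℕ → ℝ := fun m => g m * (2 * s m * (e k) m + ((e k) m) ^ 2) with hd
    have hd0 : ∀ m, m ∉ ({k} : Finset ℕ) → d m = 0 := by
      intro m hm
      simp only [Finset.mem_singleton] at hm
      simp [hd, he_ne k m hm]
    have hdsum : Summable d := summable_of_ne_finset_zero hd0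
    have hsplit : (fun m => g m * ((s + e k) m) ^ 2)
        = fun m => g m * (s m) ^ 2 + d m := by
      funext m; rw [hadd m]; simp only [hd]; ring
    have : p (s + e k) = p s + d k := by
      rw [hp, hp, hsplit, Summable.tsum_add (hsum s) hdsum]
      congr 1
      rw [tsum_eq_single k (fun m hm => hd0 m (by simpa using hm))]
    rw [this, hpe k]
    simp only [hd, he_self k]
    ring
  -- linear dependence of N+1 vectors in ℝ^N
  let v : Fin (N+1) → (Fin N → ℝ) := fun j i => α i (e j)
  have hdep : ∃ c : Fin (N+1) → ℝ, ∑ j, c j • v j = 0 ∧ ∃ j, c j ≠ 0 := by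
    rw [← Fintype.not_linearIndependent_iff]
    intro h
    have := h.fintype_card_le_finrank
    rw [Fintype.card_fin, Module.finrank_fin_fun] at this
    omega
  obtain ⟨c, hc0, k', hk'⟩ := hdep
  -- the continuous function G
  let w : Fin N → ℝ := v k'
  let L : (Fin (N+1) → ℝ) → (Fin N → ℝ) := fun t i => ∑ j, t j * v j i
  have hLcont : Continuous L := by
    apply continuous_pi; intro i
    exact continuous_finset_sum _ fun j _ => (continuous_apply j).mul continuous_const
  let G : (Fin (N+1) → ℝ) → ℝ := fun t =>
    MvPolynomial.eval (fun i => L t i + w i) Q - MvPolynomial.eval (L t) Q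
      - MvPolynomial.eval w Q - 2 * g k' * t k'
  have hGcont : Continuous G := by
    refine ((((MvPolynomial.continuous_eval (p := Q)).comp ?_).sub
      ((MvPolynomial.continuous_eval (p := Q)).comp hLcont)).sub continuous_const).sub
      (continuous_const.mul (continuous_apply k'))
    exact continuous_pi fun i => ((continuous_apply i).comp hLcont).add continuous_const
  -- G vanishes on rational tuples
  have hG0 : ∀ q : Fin (N+1) → ℚ, G (fun j => (q j : ℝ)) = 0 := by
    intro q
    set s : lp (fun _ : ℕ => ℝ) 2 := ∑ j : Fin (N+1), ((q j : ℝ)) • e (j : ℕ) with hs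
    have hsapp : ∀ m, s m = ∑ j : Fin (N+1), (q j : ℝ) * (e (j : ℕ)) m := by
      intro m
      rw [hs, lp.coeFn_sum, Finset.sum_apply]
      refine Finset.sum_congr rfl fun j _ => ?_
      rw [lp.coeFn_smul]; rfl
    have hsk : s (k' : ℕ) = q k' := by
      rw [hsapp, Finset.sum_eq_single k' (fun j _ hj => by
        rw [he_ne (j : ℕ) (k' : ℕ) (fun h => hj (Fin.val_injective h.symm)), mul_zero]) (by simp)]
      rw [he_self]; ring
    have hαs : ∀ i, α i s = L (fun j => (q j : ℝ)) i := by
      intro i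
      rw [hs, map_sum]
      refine Finset.sum_congr rfl fun j _ => ?_
      rw [map_ratCast_smul (α i) ℝ ℝ (q j) (e (j : ℕ)), smul_eq_mul]
    have hkey := key (k' : ℕ) s
    rw [hQ (s + e (k' : ℕ)), hQ s, hQ (e (k' : ℕ)), hsk] at hkey
    have h1 : (fun i => α i (s + e (k' : ℕ))) = fun i => L (fun j => (q j : ℝ)) i + w i := by
      funext i; rw [map_add, hαs i]
    have h2 : (fun i => α i s) = L (fun j => (q j : ℝ)) := by
      funext i; exact hαs i
    have h3 : (fun i => α i (e (k' : ℕ))) = w := rfl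
    rw [h1, h2, h3] at hkey
    simp only [G]
    linarith [hkey]
  -- density of rational tuples
  have hdense : Dense (Set.range (fun q : Fin (N+1) → ℚ => fun j => ((q j : ℝ)))) := by
    have : Set.range (fun q : Fin (N+1) → ℚ => fun j => ((q j : ℝ)))
        = Set.pi Set.univ (fun _ => Set.range ((↑) : ℚ → ℝ)) := by
      ext t
      constructor
      · rintro ⟨q, rfl⟩ j _; exact ⟨q j, rfl⟩
      · intro ht
        choose q hq using fun j => ht j (Set.mem_univ j)
        exact ⟨q, funext fun j => hq j⟩
    rw [this]
    exact dense_pi Set.univ fun i _ => Rat.denseRange_cast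
  -- G is identically zero
  have hGzero : G = fun _ => 0 := by
    refine Continuous.ext_on hdense hGcont continuous_const ?_
    rintro t ⟨q, rfl⟩
    exact hG0 q
  -- evaluate at c
  have hLc : L c = 0 := by
    funext i
    have := congrFun hc0 i
    simpa [L, Finset.sum_apply] using this
  have hQ0 : MvPolynomial.eval (0 : Fin N → ℝ) Q = 0 := by
    have h0 : (fun i => α i (0 : lp (fun _ : ℕ => ℝ) 2)) = (0 : Fin N → ℝ) := by
      funext i; rw [map_zero]; rfl
    have := hQ 0
    rw [h0] at this
    rw [← this, hp]
    have : (fun m => g m * ((0 : lp (fun _ : ℕ => ℝ) 2) m) ^ 2) = fun _ => (0:ℝ) := by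
      funext m
      rw [show ((0 : lp (fun _ : ℕ => ℝ) 2) m) = 0 from rfl]
      ring
    rw [this, tsum_zero]
  have hGc := congrFun hGzero c
  simp only [G, hLc] at hGc
  rw [show (fun i => (0 : Fin N → ℝ) i + w i) = w from funext fun i => zero_add _] at hGc
  rw [hQ0] at hGc
  have : g k' * c k' = 0 := by linarith
  exact hk' ((mul_eq_zero.mp this).resolve_left (hg_pos (k' : ℕ)).ne')
end

section
/- Let J be an abelian topological monoid, X a topological vector space over ℂ, n ∈ ℕ, and φ ∈ P^n(J,X). Suppose a_0, …, a_n : J × J → X satisfy φ(t + m•s) = Σ_{j=0}^{n} m^j • a_j(t,s) for all t, s ∈ J and all m ∈ ℕ. Then the leading coefficient is independent of t: a_n(t,s) = a_n(0,s) for all t, s ∈ J. -/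
open scoped BigOperators

/-- Forward difference operator: `delta h f t = f (t + h) - f t`. -/
def delta {J X : Type*} [Add J] [Sub X] (h : J) (f : J → X) : J → X :=
  fun t => f (t + h) - f t

/-- `f : J → X` is a (continuous) polynomial of degree at most `n`,
i.e. `f ∈ P^n(J, X)`. -/
def IsPolyDeg {J X : Type*} [Add J] [Sub X] [Zero X] [TopologicalSpace J] [TopologicalSpace X]
    (n : ℕ) (f : J → X) : Prop :=
  Continuous f ∧ ∀ h : J, (delta h)^[n + 1] f = 0

/-- The Vandermonde matrix with nodes `0, 1, …, N-1` (as complex numbers). -/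
noncomputable def vandMat (N : ℕ) : Matrix (Fin N) (Fin N) ℂ :=
  Matrix.vandermonde fun i => ((i : ℕ) : ℂ)

lemma vandMat_det_ne : ∀ N, (vandMat N).det ≠ 0 := by
  intro N
  rw [vandMat, Matrix.det_vandermonde_ne_zero_iff]
  intro i j h
  have : (i : ℕ) = (j : ℕ) := Nat.cast_injective h
  exact Fin.val_injective this

lemma vandMat_inv_mul (N : ℕ) : (vandMat N)⁻¹ * vandMat N = 1 :=
  Matrix.nonsing_inv_mul _ (isUnit_iff_ne_zero.mpr (vandMat_det_ne N))

/-- Interpolation: coefficients of a vector-valued polynomial are recovered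
from its values at `0, 1, …, N-1` by the inverse Vandermonde matrix. -/
lemma interp {X : Type*} [AddCommGroup X] [Module ℂ X] (N : ℕ) (c g : ℕ → X)
    (h : ∀ m : ℕ, g m = ∑ j ∈ Finset.range N, ((m : ℂ) ^ j) • c j) (j : Fin N) :
    c j = ∑ l : Fin N, (vandMat N)⁻¹ j l • g l := by
  have key : ∀ l : Fin N, g (l : ℕ) = ∑ j' : Fin N, vandMat N l j' • c (j' : ℕ) := by
    intro l
    rw [h (l : ℕ), Finset.sum_range fun j' => ((l : ℕ) : ℂ) ^ j' • c j']
    rfl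
  calc c j = ∑ l : Fin N, ∑ j' : Fin N, ((vandMat N)⁻¹ j l * vandMat N l j') • c (j' : ℕ) := by
        rw [Finset.sum_comm]
        have : ∀ j' : Fin N, (∑ l : Fin N, ((vandMat N)⁻¹ j l * vandMat N l j') • c (j' : ℕ))
            = ((1 : Matrix (Fin N) (Fin N) ℂ) j j') • c (j' : ℕ) := by
          intro j'
          rw [← Finset.sum_smul, ← Matrix.mul_apply, vandMat_inv_mul]
        simp only [this, Matrix.one_apply]
        simp [Finset.sum_ite_eq]
    _ = ∑ l : Fin N, (vandMat N)⁻¹ j l • g l := by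
        refine Finset.sum_congr rfl fun l _ => ?_
        rw [key l, Finset.smul_sum]
        exact Finset.sum_congr rfl fun j' _ => (smul_smul _ _ _).symm

/-- A vector-valued polynomial (in a complex vector space) vanishing at all
naturals has all coefficients zero. -/
lemma polyzero {X : Type*} [AddCommGroup X] [Module ℂ X] (N : ℕ) (c : ℕ → X)
    (h : ∀ m : ℕ, ∑ j ∈ Finset.range N, ((m : ℂ) ^ j) • c j = 0) :
    ∀ j < N, c j = 0 := by
  intro j hj
  have := interp N c (fun _ => 0) (fun m => (h m).symm) ⟨j, hj⟩
  simpa using this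

/-- if `φ ∈ P^n(J, X)` on an abelian topological monoid `J` and
`φ (t + m • s) = ∑_{j=0}^{n} m^j • a_j (t, s)` for all `t, s ∈ J`, `m ∈ ℕ`, then
the leading coefficient does not depend on `t`: `a_n (t, s) = a_n (0, s)`. -/
theorem leading_coefficient_independent_of_basepoint
    {J X : Type*} [AddCommMonoid J] [TopologicalSpace J] [ContinuousAdd J]
    [AddCommGroup X] [Module ℂ X] [TopologicalSpace X] [IsTopologicalAddGroup X]
    [ContinuousSMul ℂ X]
    (n : ℕ) (φ : J → X) (hφ : IsPolyDeg n φ)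
    (a : ℕ → J → J → X)
    (ha : ∀ (t s : J) (m : ℕ),
      φ (t + m • s) = ∑ j ∈ Finset.range (n + 1), ((m : ℂ) ^ j) • a j t s)
    (t s : J) : a n t s = a n 0 s := by
  classical
  set b : ℕ → ℕ → X := fun i j =>
    if h : j < n + 1 then
      ∑ l : Fin (n + 1), (vandMat (n + 1))⁻¹ ⟨j, h⟩ l • a i ((l : ℕ) • s) t
    else 0 with hb
  -- Step A: `a j (k•t) s` is a polynomial in `k` with coefficients `b i j`
  have hstepA : ∀ j, (hj : j < n + 1) → ∀ k : ℕ,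
      a j (k • t) s = ∑ i ∈ Finset.range (n + 1), ((k : ℂ) ^ i) • b i j := by
    intro j hj k
    have h1 : ∀ m : ℕ, φ (k • t + m • s)
        = ∑ j' ∈ Finset.range (n + 1), ((m : ℂ) ^ j') • a j' (k • t) s := fun m => ha _ _ m
    have heq := interp (n + 1) (fun j' => a j' (k • t) s) (fun m => φ (k • t + m • s)) h1 ⟨j, hj⟩
    simp only at heq
    rw [heq]
    have hφl : ∀ l : Fin (n + 1), φ (k • t + (l : ℕ) • s)
        = ∑ i ∈ Finset.range (n + 1), ((k : ℂ) ^ i) • a i ((l : ℕ) • s) t := by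
      intro l; rw [add_comm]; exact ha _ _ k
    simp only [hφl, Finset.smul_sum, smul_smul]
    rw [Finset.sum_comm]
    refine Finset.sum_congr rfl fun i _ => ?_
    rw [hb]
    simp only [dif_pos hj, Finset.smul_sum, smul_smul]
    refine Finset.sum_congr rfl fun l _ => ?_
    ring_nf
  -- bivariate representation of `φ (k•t + m•s)`
  have hF : ∀ k m : ℕ, φ (k • t + m • s)
      = ∑ j ∈ Finset.range (n + 1), ∑ i ∈ Finset.range (n + 1),
          ((m : ℂ) ^ j * (k : ℂ) ^ i) • b i j := by
    intro k m
    rw [ha (k • t) s m]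
    refine Finset.sum_congr rfl fun j hj => ?_
    rw [hstepA j (Finset.mem_range.mp hj) k, Finset.smul_sum]
    exact Finset.sum_congr rfl fun i _ => (smul_smul _ _ _)
  -- line through the origin with direction `p•t + s`
  have hline : ∀ p m : ℕ, φ ((p * m) • t + m • s)
      = ∑ j ∈ Finset.range (n + 1), ((m : ℂ) ^ j) • a j 0 (p • t + s) := by
    intro p m
    have : (p * m) • t + m • s = 0 + m • (p • t + s) := by
      rw [zero_add, smul_add, mul_comm, mul_smul]
    rw [this, ha]
  -- combined polynomial identity in `m` for every slope `p`
  have hcomb : ∀ p m : ℕ,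
      ∑ j ∈ Finset.range (n + 1), ∑ i ∈ Finset.range (n + 1),
          ((m : ℂ) ^ j * ((p : ℂ) ^ i * (m : ℂ) ^ i)) • b i j
        = ∑ j ∈ Finset.range (n + 1), ((m : ℂ) ^ j) • a j 0 (p • t + s) := by
    intro p m
    have h1 := hF (p * m) m
    rw [hline p m] at h1
    rw [h1]
    refine Finset.sum_congr rfl fun j _ => Finset.sum_congr rfl fun i _ => ?_
    congr 1
    push_cast
    ring
  -- high coefficients of the bivariate representation vanish
  have main : ∀ p : ℕ, ∀ d, n + 1 ≤ d → d < 2 * n + 1 →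
      (∑ i ∈ Finset.range (n + 1),
        if i ≤ d ∧ d - i < n + 1 then ((p : ℂ) ^ i) • b i (d - i) else 0) = 0 := by
    intro p
    set C : ℕ → X := fun d =>
      (∑ i ∈ Finset.range (n + 1),
          if i ≤ d ∧ d - i < n + 1 then ((p : ℂ) ^ i) • b i (d - i) else 0)
        - (if d < n + 1 then a d 0 (p • t + s) else 0) with hCdef
    have hC : ∀ m : ℕ, ∑ d ∈ Finset.range (2 * n + 1), ((m : ℂ) ^ d) • C d = 0 := by
      intro m
      simp only [hCdef, smul_sub, Finset.sum_sub_distrib, sub_eq_zero]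
      have E1 : ∑ d ∈ Finset.range (2 * n + 1),
          ((m : ℂ) ^ d) • (if d < n + 1 then a d 0 (p • t + s) else 0)
          = ∑ j ∈ Finset.range (n + 1), ((m : ℂ) ^ j) • a j 0 (p • t + s) := by
        have h0 : ∑ d ∈ Finset.range (n + 1),
            ((m : ℂ) ^ d) • (if d < n + 1 then a d 0 (p • t + s) else 0)
            = ∑ d ∈ Finset.range (2 * n + 1),
            ((m : ℂ) ^ d) • (if d < n + 1 then a d 0 (p • t + s) else 0) :=
          Finset.sum_subset (Finset.range_subset_range.mpr (by omega))
            (fun x _ hx => by rw [if_neg (by simpa using hx), smul_zero])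
        rw [← h0]
        exact Finset.sum_congr rfl fun d hd => by rw [if_pos (Finset.mem_range.mp hd)]
      have E2 : ∑ d ∈ Finset.range (2 * n + 1),
          ((m : ℂ) ^ d) • (∑ i ∈ Finset.range (n + 1),
            if i ≤ d ∧ d - i < n + 1 then ((p : ℂ) ^ i) • b i (d - i) else 0)
          = ∑ i ∈ Finset.range (n + 1), ∑ j ∈ Finset.range (n + 1),
              ((m : ℂ) ^ j * ((p : ℂ) ^ i * (m : ℂ) ^ i)) • b i j := by
        simp only [Finset.smul_sum]
        rw [Finset.sum_comm]
        refine Finset.sum_congr rfl fun i hi => ?_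
        have step1 : ∀ d : ℕ, ((m : ℂ) ^ d) •
            (if i ≤ d ∧ d - i < n + 1 then ((p : ℂ) ^ i) • b i (d - i) else 0)
            = (if i ≤ d ∧ d - i < n + 1 then ((m : ℂ) ^ d * (p : ℂ) ^ i) • b i (d - i) else 0) := by
          intro d
          split
          · rw [smul_smul]
          · rw [smul_zero]
        simp only [step1]
        rw [← Finset.sum_filter]
        have hfilt : Finset.filter (fun d => i ≤ d ∧ d - i < n + 1) (Finset.range (2 * n + 1))
            = Finset.Ico i (i + (n + 1)) := by
          ext d
          simp only [Finset.mem_filter, Finset.mem_range, Finset.mem_Ico]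
          have hi' : i < n + 1 := Finset.mem_range.mp hi
          omega
        rw [hfilt, Finset.sum_Ico_eq_sum_range]
        simp only [Nat.add_sub_cancel_left, Nat.add_sub_cancel]
        refine Finset.sum_congr rfl fun j _ => ?_
        congr 1
        ring
      rw [E1, E2, Finset.sum_comm]
      exact hcomb p m
    intro d hd1 hd2
    have := polyzero (2 * n + 1) C hC d hd2
    rw [hCdef] at this
    simp only [if_neg (by omega : ¬ d < n + 1), sub_zero] at this
    exact this
  -- hence the non-constant coefficients of `k ↦ a n (k•t) s` vanish
  have hbzero : ∀ i, 1 ≤ i → i ≤ n → b i n = 0 := by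
    intro i0 hi01 hi0n
    set D : ℕ → X := fun i =>
      if i ≤ n + i0 ∧ (n + i0) - i < n + 1 then b i ((n + i0) - i) else 0 with hDdef
    have hD : ∀ p : ℕ, ∑ i ∈ Finset.range (n + 1), ((p : ℂ) ^ i) • D i = 0 := by
      intro p
      have h1 := main p (n + i0) (by omega) (by omega)
      rw [← h1]
      refine Finset.sum_congr rfl fun i _ => ?_
      simp only [hDdef]
      split <;> simp
    have h2 := polyzero (n + 1) D hD i0 (by omega)
    have h3 : D i0 = b i0 n := by
      simp only [hDdef]
      rw [if_pos ⟨by omega, by omega⟩, Nat.add_sub_cancel]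
    rwa [h3] at h2
  -- conclusion
  have key : ∀ k : ℕ, a n (k • t) s = ((k : ℂ) ^ 0) • b 0 n := by
    intro k
    rw [hstepA n (Nat.lt_succ_self n) k]
    refine Finset.sum_eq_single_of_mem 0 (by simp) fun i hi hne => ?_
    rw [hbzero i (Nat.one_le_iff_ne_zero.mpr hne)
      (by have := Finset.mem_range.mp hi; omega), smul_zero]
  have e1 : a n t s = b 0 n := by
    have h1 := key 1
    rwa [one_smul, pow_zero, one_smul] at h1
  have e0 : a n 0 s = b 0 n := by
    have h0 := key 0
    rwa [zero_smul, pow_zero, one_smul] at h0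
  rw [e1, e0]
end

section
/- Let J be an abelian topological monoid, X a topological vector space over ℂ, and φ ∈ P^n(J,X). If there is an integer k with 0 ≤ k < n such that φ(m•s) = m^k • φ(s) for every integer m ≥ 1 and every s ∈ J, then φ ∈ P^k(J,X). -/
open scoped BigOperators

/-!
Fix `t` and `h`. For each `x : ℕ` the sequence `y ↦ φ (x • t + y • h)` is killed by `Δ^[n+1]`, so it
is the Newton interpolant `p x` of degree `≤ n`, and each coefficient `x ↦ (p x).coeff s` is again a
polynomial sequence in `x`. Homogeneity gives `(p m).coeff s * m ^ s = m ^ k * (p 1).coeff s` for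
`m ≥ 1`; when `s > k` the left side is a polynomial in `m` with no `m ^ k` term, so
`(p 1).coeff s = 0`. Hence `y ↦ φ (t + y • h)` has degree `≤ k`, and its `(k+1)`-st difference at
`0` is `Δ_h^{k+1} φ (t)`. Vector values reduce to scalar ones through linear functionals.
-/

open Finset Polynomial fwdDiff

section ForwardDifference
variable {M G : Type*} [AddCommMonoid M] [AddCommGroup G]

lemma map_fwdDiff_iter {G' F : Type*} [AddCommGroup G'] [FunLike F G G'] [AddMonoidHomClass F G G']
    (ℓ : F) (h : M) (f : M → G) (n : ℕ) (y : M) :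
    ℓ (Δ_[h] ^[n] f y) = Δ_[h] ^[n] (fun x ↦ ℓ (f x)) y := by
  simp [fwdDiff_iter_eq_sum_shift, map_sum, map_zsmul]

lemma fwdDiff_iter_comm (h t : M) (f : M → G) (i j : ℕ) :
    Δ_[h] ^[i] (Δ_[t] ^[j] f) = Δ_[t] ^[j] (Δ_[h] ^[i] f) := by
  have hc : Function.Commute (fwdDiff h) (fwdDiff t : (M → G) → M → G) := fun f ↦ by
    funext y
    simp only [fwdDiff, add_right_comm]
    abel
  exact (hc.iterate_iterate i j).eq f

lemma fwdDiff_iter_comp_nsmul (φ : M → G) (u h : M) (n y : ℕ) :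
    Δ_[1] ^[n] (fun x : ℕ ↦ φ (u + x • h)) y = Δ_[h] ^[n] φ (u + y • h) := by
  simp [fwdDiff_iter_eq_sum_shift, add_nsmul, add_assoc]

@[simp]
lemma fwdDiff_iter_zero (h : M) (n : ℕ) : Δ_[h] ^[n] (0 : M → G) = 0 :=
  Function.iterate_fixed (fwdDiff_const h 0) n

lemma fwdDiff_iter_eq_zero_of_le {h : M} {f : M → G} {N n : ℕ} (hf : Δ_[h] ^[N] f = 0)
    (hn : N ≤ n) : Δ_[h] ^[n] f = 0 := by
  obtain ⟨d, rfl⟩ := Nat.exists_eq_add_of_le hn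
  rw [add_comm, Function.iterate_add_apply, hf, fwdDiff_iter_zero]

lemma eq_sum_choose_smul_fwdDiff_iter {f : ℕ → G} {N : ℕ} (hf : Δ_[1] ^[N + 1] f = 0) (m : ℕ) :
    f m = ∑ i ∈ range (N + 1), m.choose i • Δ_[1] ^[i] f 0 := by
  have newton := shift_eq_sum_fwdDiff_iter 1 f m 0
  rw [zero_add, smul_eq_mul, mul_one] at newton
  rw [newton]
  calc ∑ i ∈ range (m + 1), m.choose i • Δ_[1] ^[i] f 0
      = ∑ i ∈ range (m + 1 + (N + 1)), m.choose i • Δ_[1] ^[i] f 0 := by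
        refine sum_subset (range_subset_range.2 (Nat.le_add_right _ _)) fun i _ hi ↦ ?_
        rw [Nat.choose_eq_zero_of_lt (by simpa using hi), zero_smul]
    _ = ∑ i ∈ range (N + 1), m.choose i • Δ_[1] ^[i] f 0 := by
        refine (sum_subset (range_subset_range.2 (Nat.le_add_left _ _)) fun i _ hi ↦ ?_).symm
        rw [fwdDiff_iter_eq_zero_of_le hf (by simpa using hi), Pi.zero_apply, smul_zero]

lemma fwdDiff_iter_natCast_comp {R : Type*} [Semiring R] (f : R → G) (n y : ℕ) :
    Δ_[1] ^[n] (fun m : ℕ ↦ f m) y = Δ_[1] ^[n] f y := by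
  simp [fwdDiff_iter_eq_sum_shift]

end ForwardDifference

lemma fwdDiff_iter_eval_natCast_eq_zero {R : Type*} [CommRing R] {p : R[X]} {n : ℕ}
    (hp : p.natDegree < n) :
    Δ_[1] ^[n] (fun m : ℕ ↦ p.eval (m : R)) = 0 := by
  ext y
  rw [fwdDiff_iter_natCast_comp (fun x ↦ p.eval x), fwdDiff_iter_eq_zero_of_degree_lt hp]
  rfl

section Field
variable {𝕜 : Type*} [Field 𝕜] [CharZero 𝕜]

noncomputable def newtonInterpolant (N : ℕ) (f : ℕ → 𝕜) : 𝕜[X] :=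
  ∑ i ∈ range (N + 1), C (Δ_[1] ^[i] f 0 / i.factorial) * descPochhammer 𝕜 i

lemma eval_newtonInterpolant {N : ℕ} {f : ℕ → 𝕜} (hf : Δ_[1] ^[N + 1] f = 0) (m : ℕ) :
    (newtonInterpolant N f).eval (m : 𝕜) = f m := by
  rw [eq_sum_choose_smul_fwdDiff_iter hf m, newtonInterpolant, eval_finsetSum]
  refine sum_congr rfl fun i _ ↦ ?_
  rw [eval_mul, eval_C, descPochhammer_eval_eq_descFactorial,
    Nat.descFactorial_eq_factorial_mul_choose, nsmul_eq_mul, Nat.cast_mul]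
  field_simp [Nat.factorial_ne_zero]

lemma coeff_newtonInterpolant (N : ℕ) (f : ℕ → 𝕜) (s : ℕ) :
    (newtonInterpolant N f).coeff s =
      ∑ i ∈ range (N + 1), ((descPochhammer 𝕜 i).coeff s / i.factorial) • Δ_[1] ^[i] f 0 := by
  simp only [newtonInterpolant, finsetSum_coeff, coeff_C_mul, smul_eq_mul]
  exact sum_congr rfl fun i _ ↦ by ring

lemma Polynomial.eq_of_eval_natCast_eq {p q : 𝕜[X]}
    (h : ∀ m : ℕ, 1 ≤ m → p.eval (m : 𝕜) = q.eval (m : 𝕜)) : p = q :=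
  eq_of_infinite_eval_eq p q <| Set.infinite_of_injective_forall_mem
    (f := fun m : ℕ ↦ ((m + 1 : ℕ) : 𝕜)) (Nat.cast_injective.comp Nat.succ_injective)
    fun m ↦ h (m + 1) m.succ_pos

lemma fwdDiff_iter_coeff_newtonInterpolant_eq_zero {F : ℕ → ℕ → 𝕜} {N M : ℕ}
    (hF : ∀ i, Δ_[1] ^[N + 1] (fun x ↦ Δ_[1] ^[i] (F x) 0) = 0) (s : ℕ) :
    Δ_[1] ^[N + 1] (fun x ↦ (newtonInterpolant M (F x)).coeff s) = 0 := by
  have hsum : (fun x ↦ (newtonInterpolant M (F x)).coeff s) =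
      ∑ i ∈ range (M + 1), ((descPochhammer 𝕜 i).coeff s / i.factorial) •
        fun x ↦ Δ_[1] ^[i] (F x) 0 := by
    ext x
    simp [coeff_newtonInterpolant]
  simp [hsum, hF]

lemma eq_zero_of_mul_pow_eq_pow_mul {c : ℕ → 𝕜} {N k s : ℕ} (hc : Δ_[1] ^[N + 1] c = 0)
    (hks : k < s) (h : ∀ m : ℕ, 1 ≤ m → c m * (m : 𝕜) ^ s = (m : 𝕜) ^ k * c 1) : c 1 = 0 := by
  have hpoly : newtonInterpolant N c * X ^ s = C (c 1) * X ^ k :=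
    eq_of_eval_natCast_eq fun m hm ↦ by
      simp only [eval_mul, eval_pow, eval_X, eval_C, eval_newtonInterpolant hc, h m hm]
      ring
  simpa [coeff_mul_X_pow', hks.not_ge, coeff_C_mul_X_pow] using (congr_arg (coeff · k) hpoly).symm

theorem fwdDiff_iter_eq_zero_of_map_nsmul_eq_pow_mul {J : Type*} [AddCommMonoid J] {φ : J → 𝕜}
    {n k : ℕ} (hφ : ∀ h, Δ_[h] ^[n + 1] φ = 0)
    (hhom : ∀ m : ℕ, 1 ≤ m → ∀ s, φ (m • s) = (m : 𝕜) ^ k * φ s) (h : J) :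
    Δ_[h] ^[k + 1] φ = 0 := by
  ext t
  set F : ℕ → ℕ → 𝕜 := fun x y ↦ φ (x • t + y • h) with hF
  set p : ℕ → 𝕜[X] := fun x ↦ newtonInterpolant n (F x)
  have hp : ∀ x y : ℕ, (p x).eval (y : 𝕜) = F x y := fun x ↦
    eval_newtonInterpolant <| funext fun y ↦ by rw [fwdDiff_iter_comp_nsmul, hφ]; rfl
  have hcoeff : ∀ s, Δ_[1] ^[n + 1] (fun x ↦ (p x).coeff s) = 0 := by
    refine fwdDiff_iter_coeff_newtonInterpolant_eq_zero fun i ↦ ?_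
    have hray : (fun x ↦ Δ_[1] ^[i] (F x) 0) = fun x : ℕ ↦ Δ_[h] ^[i] φ (0 + x • t) := by
      ext x
      rw [fwdDiff_iter_comp_nsmul, zero_smul, add_zero, zero_add]
    ext x
    rw [hray, fwdDiff_iter_comp_nsmul, ← fwdDiff_iter_comm, hφ, fwdDiff_iter_zero]
    rfl
  have hscale : ∀ m : ℕ, 1 ≤ m → ∀ s,
      (p m).coeff s * (m : 𝕜) ^ s = (m : 𝕜) ^ k * (p 1).coeff s := by
    intro m hm s
    -- both sides evaluate at `y` to `φ (m • (t + y • h))`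
    have hcomp : (p m).comp (C (m : 𝕜) * X) = C ((m : 𝕜) ^ k) * p 1 :=
      eq_of_eval_natCast_eq fun y _ ↦ by
        simp only [eval_comp, eval_mul, eval_C, eval_X, ← Nat.cast_mul, hp, hF, one_nsmul,
          ← hhom m hm, smul_add, mul_nsmul, smul_comm y m h]
    rw [← comp_C_mul_X_coeff, hcomp, coeff_C_mul]
  have hdeg : (p 1).natDegree ≤ k := natDegree_le_iff_coeff_eq_zero.2 fun s hs ↦
    eq_zero_of_mul_pow_eq_pow_mul (hcoeff s) hs fun m hm ↦ hscale m hm s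
  have hdiff := congr_fun (fwdDiff_iter_eval_natCast_eq_zero (Nat.lt_succ_of_le hdeg)) 0
  simp only [hp, hF, fwdDiff_iter_comp_nsmul] at hdiff
  simpa using hdiff

end Field

theorem fwdDiff_iter_eq_zero_of_map_nsmul_eq_pow_smul {𝕜 J X : Type*} [Field 𝕜] [CharZero 𝕜]
    [AddCommMonoid J] [AddCommGroup X] [Module 𝕜 X] {φ : J → X} {n k : ℕ}
    (hφ : ∀ h, Δ_[h] ^[n + 1] φ = 0)
    (hhom : ∀ m : ℕ, 1 ≤ m → ∀ s, φ (m • s) = (m : 𝕜) ^ k • φ s) (h : J) :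
    Δ_[h] ^[k + 1] φ = 0 := by
  ext t
  rw [Pi.zero_apply, ← Module.forall_dual_apply_eq_zero_iff 𝕜]
  intro ℓ
  rw [map_fwdDiff_iter]
  refine congr_fun (fwdDiff_iter_eq_zero_of_map_nsmul_eq_pow_mul (n := n)
    (fun h' ↦ funext fun y ↦ ?_) (fun m hm s ↦ ?_) h) t
  · rw [← map_fwdDiff_iter, hφ, Pi.zero_apply, map_zero, Pi.zero_apply]
  · rw [hhom m hm, map_smul, smul_eq_mul]

theorem homogeneous_polynomial_degree_drop_general
    {J X : Type*} [AddCommMonoid J] [TopologicalSpace J]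
    [AddCommGroup X] [Module ℂ X] [TopologicalSpace X]
    (n k : ℕ) (φ : J → X) (hφ : IsPolyDeg n φ)
    (hhom : ∀ m : ℕ, 1 ≤ m → ∀ s : J, φ (m • s) = ((m : ℂ) ^ k) • φ s) :
    IsPolyDeg k φ :=
  -- `delta` is definitionally Mathlib's `fwdDiff`
  ⟨hφ.1, fwdDiff_iter_eq_zero_of_map_nsmul_eq_pow_smul hφ.2 hhom⟩

/-- if `φ ∈ P^n(J, X)` on an abelian topological monoid `J` and
`φ (m • s) = m^k • φ s` for some `0 ≤ k < n`, every `m ≥ 1` and every `s`,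
then `φ ∈ P^k(J, X)`. -/
theorem homogeneous_polynomial_degree_drop
    {J X : Type*} [AddCommMonoid J] [TopologicalSpace J] [ContinuousAdd J]
    [AddCommGroup X] [Module ℂ X] [TopologicalSpace X] [IsTopologicalAddGroup X]
    [ContinuousSMul ℂ X]
    (n k : ℕ) (φ : J → X) (hφ : IsPolyDeg n φ) (hk : k < n)
    (hhom : ∀ m : ℕ, 1 ≤ m → ∀ s : J, φ (m • s) = ((m : ℂ) ^ k) • φ s) :
    IsPolyDeg k φ :=
  homogeneous_polynomial_degree_drop_general n k φ hφ hhom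
end

section
/- Let J be an abelian topological monoid, X a topological vector space over ℂ, and φ ∈ P^n(J,X). Then φ = Σ_{j=0}^{n} a_j, where each a_j ∈ P^j(J,X) and each a_j is homogeneous of degree j in the sense that a_j(m•t) = m^j • a_j(t) for every integer m ≥ 1 and every t ∈ J. -/
open scoped BigOperators

/-!
By the Gregory–Newton formula, `m ↦ φ (m • t)` is a polynomial of degree `≤ n` in `m`; let
`a j t` be its coefficient of `m ^ j`. Since `φ (m • r • t) = φ ((m * r) • t)`, `a j` is
homogeneous of degree `j`, and evaluating at `m = 1` gives `φ = ∑ j, a j`. Inverting a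
Vandermonde matrix writes `a j t` as a fixed linear combination of `φ (m • t)`, `m < 2n + 1`,
so `a j` is continuous. Finally `φ (m • s + q • h)` is a polynomial in `(m, q)` of degree `≤ n`
in each variable, so `a j (s + q • h)`, the coefficient of `m ^ j` in `φ (m • s + (m * q) • h)`,
is a polynomial of degree `≤ j` in `q`, i.e. `a j ∈ P^j`.
-/

open Finset Polynomial fwdDiff

section Weights

variable {𝕜 X : Type*} [Field 𝕜] [AddCommGroup X] [Module 𝕜 X]

theorem exists_sum_mul_pow_eq_ite [CharZero 𝕜] (N : ℕ) :
    ∃ w : ℕ → ℕ → 𝕜, ∀ k < N, ∀ b < N,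
      ∑ m ∈ range N, w k m * (m : 𝕜) ^ b = if b = k then 1 else 0 := by
  set V := Matrix.vandermonde fun i : Fin N ↦ (i : 𝕜) with hVdef
  have hV : IsUnit V.det := isUnit_iff_ne_zero.mpr <|
    Matrix.det_vandermonde_ne_zero_iff.mpr fun i j hij ↦ Fin.ext (by exact_mod_cast hij)
  refine ⟨fun k m ↦ if h : k < N ∧ m < N then V⁻¹ ⟨k, h.1⟩ ⟨m, h.2⟩ else 0, fun k hk b hb ↦ ?_⟩
  have := congr_fun₂ (Matrix.nonsing_inv_mul V hV) ⟨k, hk⟩ ⟨b, hb⟩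
  simp only [Matrix.mul_apply, hVdef, Matrix.vandermonde_apply, Matrix.one_apply,
    Fin.ext_iff] at this
  rw [← Fin.sum_univ_eq_sum_range]
  simpa [hk, eq_comm] using this

theorem sum_smul_sum_pow_smul {N k : ℕ} {w : ℕ → 𝕜}
    (hw : ∀ b < N, ∑ m ∈ range N, w m * (m : 𝕜) ^ b = if b = k then 1 else 0)
    {ι : Type*} (s : Finset ι) (e : ι → ℕ) (he : ∀ i ∈ s, e i < N) (y : ι → X) :
    ∑ m ∈ range N, w m • ∑ i ∈ s, (m : 𝕜) ^ e i • y i = ∑ i ∈ s with e i = k, y i := by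
  simp_rw [smul_sum, smul_smul]
  rw [sum_comm, sum_filter]
  refine sum_congr rfl fun i hi ↦ ?_
  rw [← sum_smul, hw _ (he i hi), ite_smul, one_smul, zero_smul]

end Weights

section Differences

variable {J X : Type*} [AddCommMonoid J] [AddCommGroup X]

theorem fwdDiff_comm (g h : J) (f : J → X) : Δ_[g] (Δ_[h] f) = Δ_[h] (Δ_[g] f) := by
  funext t
  simp only [fwdDiff, add_right_comm t g h]
  abel

theorem fwdDiff_iter_zero_s6 (h : J) (j : ℕ) : (Δ_[h])^[j] (0 : J → X) = 0 :=
  Function.iterate_fixed (by ext; simp [fwdDiff]) j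

theorem shift_eq_sum_range_fwdDiff_iter {n : ℕ} {h : J} {f : J → X}
    (hf : (Δ_[h])^[n + 1] f = 0) (y : J) (q : ℕ) :
    f (y + q • h) = ∑ j ∈ range (n + 1), q.choose j • (Δ_[h])^[j] f y := by
  have hvanish : ∀ j ≥ n + 1, (Δ_[h])^[j] f = 0 := fun j hj ↦ by
    rw [← Nat.sub_add_cancel hj, Function.iterate_add_apply, hf]
    exact fwdDiff_iter_zero_s6 h _
  rw [shift_eq_sum_fwdDiff_iter h f q y,
    ← eventually_constant_sum (N := q + 1) (n := q + n + 1) _ (by omega),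
    eventually_constant_sum (N := n + 1) _ (by omega)]
  · intro j hj; rw [hvanish j hj, Pi.zero_apply, smul_zero]
  · intro j hj; rw [Nat.choose_eq_zero_of_lt hj, zero_smul]

end Differences

theorem exists_polynomial_eval_natCast_eq_choose (𝕜 : Type*) [Field 𝕜] [CharZero 𝕜] (j : ℕ) :
    ∃ p : 𝕜[X], p.natDegree ≤ j ∧ ∀ q : ℕ, p.eval (q : 𝕜) = q.choose j := by
  refine ⟨C (j.factorial : 𝕜)⁻¹ * descPochhammer 𝕜 j,
    (natDegree_C_mul_le _ _).trans (descPochhammer_natDegree 𝕜 j).le, fun q ↦ ?_⟩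
  have hfac : (j.factorial : 𝕜) ≠ 0 := by exact_mod_cast j.factorial_ne_zero
  rw [eval_mul, eval_C, descPochhammer_eval_eq_descFactorial,
    Nat.descFactorial_eq_factorial_mul_choose, Nat.cast_mul, inv_mul_cancel_left₀ hfac]

section Polynomials

variable {J X : Type*} [AddCommMonoid J] [AddCommGroup X]

variable (𝕜 : Type*) [Field 𝕜] [Module 𝕜 X] in
def polyLE (n : ℕ) : Submodule 𝕜 (J → X) where
  carrier := {f | ∀ h : J, (Δ_[h])^[n + 1] f = 0}
  add_mem' hf hg h := by simp [hf h, hg h]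
  zero_mem' h := fwdDiff_iter_zero_s6 h _
  smul_mem' c f hf h := by simp [hf h]

theorem isPolyDeg_iff [TopologicalSpace J] [TopologicalSpace X] (𝕜 : Type*) [Field 𝕜] [Module 𝕜 X]
    {n : ℕ} {f : J → X} : IsPolyDeg n f ↔ Continuous f ∧ f ∈ polyLE 𝕜 n := Iff.rfl

variable {𝕜 : Type*} [Field 𝕜] [Module 𝕜 X] {n : ℕ} {f : J → X}

theorem fwdDiff_iter_mem_polyLE (hf : f ∈ polyLE 𝕜 n) (h : J) (j : ℕ) :
    (Δ_[h])^[j] f ∈ polyLE 𝕜 n := fun g ↦ by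
  have hcomm : Function.Commute (fwdDiff g) (fwdDiff h : (J → X) → J → X) := fwdDiff_comm g h
  rw [hcomm.iterate_iterate (n + 1) j f, hf g, fwdDiff_iter_zero_s6]

end Polynomials

section Coefficients

variable {J X : Type*} [AddCommMonoid J] [AddCommGroup X]
  {𝕜 : Type*} [Field 𝕜] [CharZero 𝕜] [Module 𝕜 X] {n : ℕ} {f : J → X}

theorem exists_shift_eq_sum_pow_smul (hf : f ∈ polyLE 𝕜 n) (h : J) :
    ∃ c : ℕ → J → X, (∀ b, c b ∈ polyLE 𝕜 n) ∧
      ∀ y (q : ℕ), f (y + q • h) = ∑ b ∈ range (n + 1), (q : 𝕜) ^ b • c b y := by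
  choose p hpdeg hpeval using exists_polynomial_eval_natCast_eq_choose 𝕜
  refine ⟨fun b ↦ ∑ j ∈ range (n + 1), (p j).coeff b • (Δ_[h])^[j] f,
    fun b ↦ sum_mem fun j _ ↦ Submodule.smul_mem _ _ (fwdDiff_iter_mem_polyLE hf h j),
    fun y q ↦ ?_⟩
  have hchoose : ∀ j ∈ range (n + 1),
      q.choose j = ∑ b ∈ range (n + 1), ((p j).coeff b * (q : 𝕜) ^ b) := fun j hj ↦ by
    rw [← hpeval, eval_eq_sum_range' ((hpdeg j).trans_lt (mem_range.mp hj))]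
  rw [shift_eq_sum_range_fwdDiff_iter (hf h)]
  simp only [Finset.sum_apply, Pi.smul_apply, smul_sum, smul_smul]
  rw [sum_comm]
  refine sum_congr rfl fun j hj ↦ ?_
  rw [← Nat.cast_smul_eq_nsmul 𝕜, hchoose j hj, sum_smul]
  exact sum_congr rfl fun b _ ↦ by rw [mul_comm]

theorem exists_nsmul_eq_sum_pow_smul (hf : f ∈ polyLE 𝕜 n) (t : J) :
    ∃ c : ℕ → X, ∀ q : ℕ, f (q • t) = ∑ b ∈ range (n + 1), (q : 𝕜) ^ b • c b := by
  obtain ⟨c, -, hc⟩ := exists_shift_eq_sum_pow_smul hf t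
  exact ⟨fun b ↦ c b 0, fun q ↦ by simpa using hc 0 q⟩

theorem exists_nsmul_add_nsmul_eq_sum (hf : f ∈ polyLE 𝕜 n) (s h : J) :
    ∃ x : ℕ × ℕ → X, ∀ m q : ℕ, f (m • s + q • h) =
      ∑ p ∈ range (n + 1) ×ˢ range (n + 1), ((m : 𝕜) ^ p.1 * (q : 𝕜) ^ p.2) • x p := by
  obtain ⟨c, hc, hfc⟩ := exists_shift_eq_sum_pow_smul hf h
  choose d hd using fun b ↦ exists_nsmul_eq_sum_pow_smul (hc b) s
  refine ⟨fun p ↦ d p.2 p.1, fun m q ↦ ?_⟩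
  rw [hfc, sum_product, sum_comm]
  refine sum_congr rfl fun b _ ↦ ?_
  rw [hd, smul_sum]
  exact sum_congr rfl fun a _ ↦ by rw [smul_smul, mul_comm]

end Coefficients

theorem fwdDiff_iter_eq_zero_of_shift_eq_sum_pow_smul {J X 𝕜 : Type*} [AddCommMonoid J]
    [AddCommGroup X] [Field 𝕜] [Module 𝕜 X] {k : ℕ} {F : J → X} {s h : J}
    {ι : Type*} (S : Finset ι) (e : ι → ℕ) (he : ∀ i ∈ S, e i ≤ k) (z : ι → X)
    (hF : ∀ q : ℕ, F (s + q • h) = ∑ i ∈ S, (q : 𝕜) ^ e i • z i) :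
    (Δ_[h])^[k + 1] F s = 0 := by
  have hpow : ∀ b ≤ k,
      ∑ j ∈ range (k + 2), ((-1 : ℤ) ^ (k + 1 - j) * (k + 1).choose j) • (j : 𝕜) ^ b = 0 := by
    intro b hb
    have := congr_fun (fwdDiff_iter_pow_eq_zero_of_lt (R := 𝕜) (Nat.lt_succ_of_le hb)) 0
    simpa [fwdDiff_iter_eq_sum_shift] using this
  rw [fwdDiff_iter_eq_sum_shift]
  simp_rw [hF, smul_sum, ← smul_assoc]
  rw [sum_comm]
  exact sum_eq_zero fun i hi ↦ by rw [← sum_smul, hpow _ (he i hi), zero_smul]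

section Dilation

variable {J X 𝕜 : Type*} [AddCommMonoid J] [AddCommGroup X] [Field 𝕜] [Module 𝕜 X]

def dilationSum (N : ℕ) (w : ℕ → 𝕜) (f : J → X) (t : J) : X :=
  ∑ m ∈ range N, w m • f (m • t)

theorem continuous_dilationSum [TopologicalSpace J] [ContinuousAdd J] [TopologicalSpace X]
    [ContinuousAdd X] [ContinuousConstSMul 𝕜 X] (N : ℕ) (w : ℕ → 𝕜) {f : J → X}
    (hf : Continuous f) : Continuous (dilationSum N w f) :=
  continuous_finsetSum _ fun m _ ↦ (hf.comp (continuous_nsmul m)).const_smul _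

variable {N k n : ℕ} {w : ℕ → 𝕜} {f : J → X}

theorem dilationSum_nsmul
    (hw : ∀ b < N, ∑ m ∈ range N, w m * (m : 𝕜) ^ b = if b = k then 1 else 0)
    (hnN : n < N) (hk : k ≤ n) {c : ℕ → X} {t : J}
    (hc : ∀ q : ℕ, f (q • t) = ∑ b ∈ range (n + 1), (q : 𝕜) ^ b • c b) (r : ℕ) :
    dilationSum N w f (r • t) = (r : 𝕜) ^ k • c k := by
  have hterm : ∀ m : ℕ, f (m • r • t) = ∑ b ∈ range (n + 1), (m : 𝕜) ^ b • (r : 𝕜) ^ b • c b :=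
    fun m ↦ by simp_rw [smul_smul, hc, Nat.cast_mul, mul_pow]
  simp_rw [dilationSum, hterm]
  refine (sum_smul_sum_pow_smul hw _ (fun b ↦ b) (fun b hb ↦ by rw [mem_range] at hb; omega) _).trans ?_
  simp [hk]

theorem dilationSum_mem_polyLE [CharZero 𝕜] (hf : f ∈ polyLE 𝕜 n) (hN : 2 * n < N)
    (hw : ∀ b < N, ∑ m ∈ range N, w m * (m : 𝕜) ^ b = if b = k then 1 else 0) :
    dilationSum N w f ∈ polyLE 𝕜 k := fun h ↦ by
  funext s
  obtain ⟨x, hx⟩ := exists_nsmul_add_nsmul_eq_sum hf s h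
  refine fwdDiff_iter_eq_zero_of_shift_eq_sum_pow_smul (𝕜 := 𝕜)
    {p ∈ range (n + 1) ×ˢ range (n + 1) | p.1 + p.2 = k} Prod.snd
    (fun p hp ↦ by simp only [mem_filter] at hp; omega) x fun q ↦ ?_
  have hterm : ∀ m : ℕ, f (m • (s + q • h)) = ∑ p ∈ range (n + 1) ×ˢ range (n + 1),
      (m : 𝕜) ^ (p.1 + p.2) • (q : 𝕜) ^ p.2 • x p := fun m ↦ by
    rw [smul_add, smul_smul, hx]
    refine sum_congr rfl fun p _ ↦ ?_
    rw [smul_smul, Nat.cast_mul, mul_pow, pow_add, mul_assoc]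
  simp_rw [dilationSum, hterm]
  exact sum_smul_sum_pow_smul hw _ _
    (fun p hp ↦ by simp only [mem_product, mem_range] at hp; omega) _

end Dilation

/-- every `φ ∈ P^n(J, X)` on an abelian topological monoid `J` decomposes
as `φ = ∑_{j=0}^{n} a_j` where `a_j ∈ P^j(J, X)` and each `a_j` is homogeneous of degree
`j`: `a_j (m • t) = m^j • a_j t` for all integers `m ≥ 1` and all `t ∈ J`. -/
theorem polynomial_decomposition_into_homogeneous_parts
    {J X : Type*} [AddCommMonoid J] [TopologicalSpace J] [ContinuousAdd J]
    [AddCommGroup X] [Module ℂ X] [TopologicalSpace X] [IsTopologicalAddGroup X]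
    [ContinuousSMul ℂ X]
    (n : ℕ) (φ : J → X) (hφ : IsPolyDeg n φ) :
    ∃ a : ℕ → J → X,
      (∀ j ≤ n, IsPolyDeg j (a j)) ∧
      (∀ j ≤ n, ∀ m : ℕ, 1 ≤ m → ∀ t : J, a j (m • t) = ((m : ℂ) ^ j) • a j t) ∧
      (∀ t : J, φ t = ∑ j ∈ Finset.range (n + 1), a j t) := by
  obtain ⟨hcont, hpoly⟩ := (isPolyDeg_iff ℂ).mp hφ
  -- `2 * n + 1` nodes, because `φ (m • s + (m * q) • h)` has degree up to `2 * n` in `m`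
  obtain ⟨w, hw⟩ := exists_sum_mul_pow_eq_ite (𝕜 := ℂ) (2 * n + 1)
  set a := fun j ↦ dilationSum (2 * n + 1) (w j) φ
  have ha : ∀ t, ∃ c : ℕ → X, (φ t = ∑ j ∈ range (n + 1), c j) ∧
      ∀ j ≤ n, ∀ r : ℕ, a j (r • t) = (r : ℂ) ^ j • c j := fun t ↦ by
    obtain ⟨c, hc⟩ := exists_nsmul_eq_sum_pow_smul hpoly t
    exact ⟨c, by simpa using hc 1, fun j hj ↦ dilationSum_nsmul (hw j (by omega)) (by omega) hj hc⟩
  refine ⟨a, fun j hj ↦ (isPolyDeg_iff ℂ).mpr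
    ⟨continuous_dilationSum _ _ hcont, dilationSum_mem_polyLE hpoly (by omega) (hw j (by omega))⟩,
    fun j hj m _ t ↦ ?_, fun t ↦ ?_⟩
  · obtain ⟨c, -, hc⟩ := ha t
    have hat : a j t = c j := by simpa using hc j hj 1
    rw [hc j hj m, hat]
  · obtain ⟨c, hφc, hc⟩ := ha t
    rw [hφc]
    exact sum_congr rfl fun j hj ↦ by
      simpa using (hc j (Nat.lt_succ_iff.mp (mem_range.mp hj)) 1).symm
end

section
/- Let K be an abelian topological group that is either compact or a torsion group (every element has finite order), and let X be a Hausdorff topological vector space over ℂ. Then every polynomial p ∈ P(K,X) is constant; that is, P(K,X) = P^0(K,X) consists exactly of the constant functions. -/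
open scoped BigOperators

/-!
Along an orbit, `g m = p (t + m • h)` satisfies `(delta 1)^[n+1] g = 0`. If `g` lies in a class
of sequences that is stable under `delta 1` and contains no nonconstant arithmetic progression,
induction on `n` gives `delta 1 g = 0`: once `delta 1 (delta 1 g) = 0`, `g` is an arithmetic
progression `g 0 + m • c`, so `c = 0`. For compact `K` take the sequences with von Neumann
bounded range (`m • c` bounded forces `c = 0`, as `m⁻¹ • m • c → 0`); for torsion `K` the
sequences periodic with period the order of `h` (`N • c = 0` forces `c = 0` over `ℂ`).
-/

open Filter Topology Function Set

section Sequence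

variable {M : Type*} [AddCommGroup M]

lemma eq_add_nsmul_of_delta_one_eq_const {g : ℕ → M} {c : M} (hg : delta 1 g = fun _ => c)
    (m : ℕ) : g m = g 0 + m • c := by
  induction m with
  | zero => simp
  | succ k ih => rw [succ_nsmul, ← add_assoc, ← ih, ← congrFun hg k, delta, add_sub_cancel]

lemma delta_one_eq_zero_of_iterate_eq_zero (P : (ℕ → M) → Prop)
    (hP : ∀ g, P g → P (delta 1 g))
    (hconst : ∀ g c, P g → delta 1 g = (fun _ => c) → c = 0) :
    ∀ (n : ℕ) (g : ℕ → M), P g → (delta 1)^[n + 1] g = 0 → delta 1 g = 0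
  | 0, _, _, hg => hg
  | n + 1, g, hPg, hg => by
    have hdd : delta 1 (delta 1 g) = 0 :=
      delta_one_eq_zero_of_iterate_eq_zero P hP hconst n _ (hP g hPg) hg
    have hd : delta 1 g = fun _ => delta 1 g 0 := funext fun m => by
      simpa using eq_add_nsmul_of_delta_one_eq_const (c := 0) hdd m
    rw [hd, hconst g _ hPg hd]
    rfl

lemma Function.Periodic.delta_one {g : ℕ → M} {N : ℕ} (hg : Periodic g N) :
    Periodic (delta 1 g) N :=
  fun m => by simp only [_root_.delta, add_right_comm m N 1, hg (m + 1), hg m]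

lemma delta_one_eq_zero_of_periodic [IsAddTorsionFree M] {g : ℕ → M}
    {N : ℕ} (hg : Periodic g N) (hN : N ≠ 0) {n : ℕ} (hgn : (delta 1)^[n + 1] g = 0) :
    delta 1 g = 0 := by
  refine delta_one_eq_zero_of_iterate_eq_zero (Periodic · N) (fun _ => Periodic.delta_one)
    (fun g c hg hc => ?_) n g hg hgn
  have hNc : N • c = 0 := by
    simpa [hg.eq] using eq_add_nsmul_of_delta_one_eq_const hc N
  exact (nsmul_eq_zero_iff.mp hNc).resolve_right hN

variable {𝕜 : Type*} [RCLike 𝕜] [Module 𝕜 M] [TopologicalSpace M]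

lemma eq_zero_of_isVonNBounded_nsmul [T2Space M] {c : M} {S : Set M}
    (hS : Bornology.IsVonNBounded 𝕜 S) (hc : ∀ m : ℕ, m • c ∈ S) : c = 0 := by
  have hlim : Tendsto (fun m : ℕ => ((m : 𝕜))⁻¹ • m • c) atTop (𝓝 0) :=
    hS.smul_tendsto_zero (Eventually.of_forall hc) tendsto_inv_atTop_nhds_zero_nat
  have hev : (fun m : ℕ => ((m : 𝕜))⁻¹ • m • c) =ᶠ[atTop] fun _ => c := by
    filter_upwards [eventually_ne_atTop 0] with m hm
    rw [← Nat.cast_smul_eq_nsmul 𝕜, smul_smul, inv_mul_cancel₀ (Nat.cast_ne_zero.mpr hm),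
      one_smul]
  exact tendsto_nhds_unique (tendsto_const_nhds.congr' hev.symm) hlim

lemma delta_one_eq_zero_of_isVonNBounded_range [IsTopologicalAddGroup M] [T2Space M]
    {g : ℕ → M} (hb : Bornology.IsVonNBounded 𝕜 (range g)) {n : ℕ}
    (hgn : (delta 1)^[n + 1] g = 0) : delta 1 g = 0 := by
  refine delta_one_eq_zero_of_iterate_eq_zero (fun g => Bornology.IsVonNBounded 𝕜 (range g))
    (fun g hg => (hg.sub hg).subset ?_) (fun g c hg hc => ?_) n g hb hgn
  · rintro _ ⟨m, rfl⟩
    exact sub_mem_sub (mem_range_self _) (mem_range_self _)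
  · refine eq_zero_of_isVonNBounded_nsmul (hg.sub hg) fun m => ?_
    rw [eq_sub_of_add_eq' (eq_add_nsmul_of_delta_one_eq_const hc m).symm]
    exact sub_mem_sub (mem_range_self _) (mem_range_self _)

end Sequence

section Orbit

variable {J X : Type*} [AddMonoid J] [AddGroup X]

lemma iterate_delta_one_comp_orbit (p : J → X) (t h : J) (k : ℕ) :
    (delta 1)^[k] (fun m : ℕ => p (t + m • h)) = fun m => (delta h)^[k] p (t + m • h) := by
  induction k with
  | zero => rfl
  | succ k ih =>
    funext m
    simp only [iterate_succ_apply', ih, delta, succ_nsmul, add_assoc]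

lemma isPolyDeg_zero_iff_eq_const [TopologicalSpace J] [TopologicalSpace X] {p : J → X} :
    IsPolyDeg 0 p ↔ ∃ c : X, p = fun _ => c := by
  constructor
  · rintro ⟨-, hp⟩
    refine ⟨p 0, funext fun t => ?_⟩
    simpa [delta, sub_eq_zero] using congrFun (hp t) 0
  · rintro ⟨c, rfl⟩
    exact ⟨continuous_const, fun h => funext fun t => sub_self c⟩

end Orbit

theorem polynomials_on_compact_or_torsion_group_constant_general
    {K X : Type*} [AddCommGroup K] [TopologicalSpace K]
    [AddCommGroup X] [Module ℂ X] [TopologicalSpace X] [IsTopologicalAddGroup X]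
    [ContinuousSMul ℂ X] [T2Space X]
    (hK : CompactSpace K ∨ ∀ t : K, IsOfFinAddOrder t)
    (p : K → X) :
    ((∃ n : ℕ, IsPolyDeg n p) ↔ IsPolyDeg 0 p) ∧
    (IsPolyDeg 0 p ↔ ∃ c : X, p = fun _ => c) := by
  refine ⟨⟨fun ⟨n, hcont, hp⟩ => ⟨hcont, fun h => funext fun t => ?_⟩, fun h0 => ⟨0, h0⟩⟩,
    isPolyDeg_zero_iff_eq_const⟩
  have hgn : (delta 1)^[n + 1] (fun m : ℕ => p (t + m • h)) = 0 := by
    rw [iterate_delta_one_comp_orbit, hp h]; rfl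
  suffices hg : delta 1 (fun m : ℕ => p (t + m • h)) = 0 by simpa [delta] using congrFun hg 0
  rcases hK with hK | hK
  · refine delta_one_eq_zero_of_isVonNBounded_range (𝕜 := ℂ) ?_ hgn
    exact ((isCompact_range hcont).isVonNBounded ℂ).subset (range_comp_subset_range _ p)
  · have := IsAddTorsionFree.of_isTorsionFree ℂ X
    refine delta_one_eq_zero_of_periodic (fun m => ?_) (hK h).addOrderOf_pos.ne' hgn
    simp [add_nsmul, addOrderOf_nsmul_eq_zero]

/-- on an abelian topological group `K` which is compact or torsion,
every polynomial with values in a Hausdorff topological vector space `X` over `ℂ` is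
constant: `P(K, X) = P^0(K, X)` and these are exactly the constant functions. -/
theorem polynomials_on_compact_or_torsion_group_constant
    {K X : Type*} [AddCommGroup K] [TopologicalSpace K] [IsTopologicalAddGroup K]
    [AddCommGroup X] [Module ℂ X] [TopologicalSpace X] [IsTopologicalAddGroup X]
    [ContinuousSMul ℂ X] [T2Space X]
    (hK : CompactSpace K ∨ ∀ t : K, IsOfFinAddOrder t)
    (p : K → X) :
    ((∃ n : ℕ, IsPolyDeg n p) ↔ IsPolyDeg 0 p) ∧
    (IsPolyDeg 0 p ↔ ∃ c : X, p = fun _ => c) :=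
  polynomials_on_compact_or_torsion_group_constant_general hK p
end

section
/- Let J be an abelian topological semigroup, X a Hausdorff locally convex topological vector space over ℂ, and n ∈ ℕ. If P^n(J) is finite dimensional, then P^n(J,X) = P^n(J) ⊗ X; that is, every p ∈ P^n(J,X) can be written as a finite sum p = Σ_{i=1}^{k} q_i(·) • x_i with q_i ∈ P^n(J) and x_i ∈ X. -/
open scoped BigOperators

theorem delta_add {J X : Type*} [Add J] [AddCommGroup X] (h : J) (f g : J → X) :
    delta h (f + g) = delta h f + delta h g := by
  funext t
  simp only [delta, Pi.add_apply]
  abel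

theorem delta_smul {J X : Type*} [Add J] [AddCommGroup X] [Module ℂ X]
    (h : J) (c : ℂ) (f : J → X) :
    delta h (c • f) = c • delta h f := by
  funext t
  simp only [delta, Pi.smul_apply, smul_sub]

theorem delta_zero {J X : Type*} [Add J] [AddCommGroup X] (h : J) :
    delta h (0 : J → X) = 0 := by
  funext t
  simp [delta]

theorem delta_iter_add {J X : Type*} [Add J] [AddCommGroup X] (h : J) (k : ℕ) (f g : J → X) :
    (delta h)^[k] (f + g) = (delta h)^[k] f + (delta h)^[k] g := by
  induction k generalizing f g with
  | zero => rfl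
  | succ k ih =>
    rw [Function.iterate_succ_apply, Function.iterate_succ_apply, Function.iterate_succ_apply,
      delta_add, ih]

theorem delta_iter_smul {J X : Type*} [Add J] [AddCommGroup X] [Module ℂ X]
    (h : J) (k : ℕ) (c : ℂ) (f : J → X) :
    (delta h)^[k] (c • f) = c • (delta h)^[k] f := by
  induction k generalizing f with
  | zero => rfl
  | succ k ih =>
    rw [Function.iterate_succ_apply, Function.iterate_succ_apply, delta_smul, ih]

theorem delta_iter_zero {J X : Type*} [Add J] [AddCommGroup X] (h : J) (k : ℕ) :
    (delta h)^[k] (0 : J → X) = 0 :=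
  Function.iterate_fixed (delta_zero h) k

/-- The space `P^n(J, X)` of polynomials of degree at most `n`, as a `ℂ`-submodule of the
space of all functions `J → X`. -/
def polySpace (J X : Type*) [Add J] [TopologicalSpace J] [AddCommGroup X] [Module ℂ X]
    [TopologicalSpace X] [IsTopologicalAddGroup X] [ContinuousSMul ℂ X] (n : ℕ) :
    Submodule ℂ (J → X) where
  carrier := {p | IsPolyDeg n p}
  zero_mem' := ⟨continuous_zero, fun h => delta_iter_zero h (n + 1)⟩
  add_mem' := by
    rintro f g ⟨hfc, hfd⟩ ⟨hgc, hgd⟩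
    exact ⟨hfc.add hgc, fun h => by rw [delta_iter_add, hfd h, hgd h, add_zero]⟩
  smul_mem' := by
    rintro c f ⟨hfc, hfd⟩
    exact ⟨hfc.const_smul c, fun h => by rw [delta_iter_smul, hfd h, smul_zero]⟩

/-!
Since `P^n(J)` is finite-dimensional, finitely many evaluations `q ↦ q(tᵢ)` already determine
its elements, which gives an interpolation formula `q(s) = ∑ q(tᵢ) qᵢ(s)` valid on all of
`P^n(J)`. Applied to `L ∘ p` for every continuous functional `L`, it shows that `L` takes the same
value on `p(s)` and on `∑ qᵢ(s) • p(tᵢ)`; these functionals separate points by Hahn–Banach.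
-/

section Differences

variable {J X Y F : Type*} [Add J] [AddCommGroup X] [AddCommGroup Y]
  [FunLike F X Y] [AddMonoidHomClass F X Y]

theorem semiconj_comp_delta (L : F) (h : J) :
    Function.Semiconj (fun f : J → X => L ∘ f) (delta h) (delta h) := fun f => by
  funext t
  simp [delta]

theorem IsPolyDeg.comp [TopologicalSpace J] [TopologicalSpace X] [TopologicalSpace Y]
    [ContinuousMapClass F X Y] {n : ℕ} {p : J → X} (hp : IsPolyDeg n p) (L : F) :
    IsPolyDeg n (L ∘ p) := by
  refine ⟨(map_continuous L).comp hp.1, fun h => ?_⟩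
  rw [← (semiconj_comp_delta L h).iterate_right (n + 1) p, hp.2 h]
  funext t
  exact map_zero L

end Differences

theorem RCLike.separatingDual_of_locallyConvexSpace {𝕜 E : Type*} [RCLike 𝕜]
    [TopologicalSpace E] [AddCommGroup E] [Module ℝ E] [Module 𝕜 E] [IsScalarTower ℝ 𝕜 E]
    [IsTopologicalAddGroup E] [ContinuousSMul 𝕜 E] [LocallyConvexSpace ℝ E] [T1Space E] :
    SeparatingDual 𝕜 E :=
  ⟨fun _ hx => (RCLike.geometric_hahn_banach_point_point hx).imp fun f hf hf' => by
    simp [hf'] at hf⟩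

section Interpolation

variable {K J : Type*} [Field K] (V : Submodule K (J → K)) [FiniteDimensional K V]

theorem Submodule.exists_fin_eq_zero_of_forall_apply_eq_zero :
    ∃ (k : ℕ) (t : Fin k → J), ∀ f ∈ V, (∀ i, f (t i) = 0) → f = 0 := by
  let ev : J → Module.Dual K V := fun s => (LinearMap.proj s).comp V.subtype
  -- the evaluations separate the points of `V`, so they span its dual, and a finite
  -- subfamily of them already does
  have hspan : Submodule.span K (Set.range ev) = ⊤ := by
    refine Submodule.span_eq_top_of_ne_zero fun f hf => ?_
    obtain ⟨s, hs⟩ := Function.ne_iff.1 (Subtype.coe_ne_coe.2 hf)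
    exact ⟨ev s, Set.mem_range_self s, hs⟩
  obtain ⟨φ, hφ, hφspan, -⟩ := Submodule.exists_fun_fin_finrank_span_eq K (Set.range ev)
  choose t ht using hφ
  refine ⟨_, t, fun f hf hft => ?_⟩
  have heval : Module.Dual.eval K V ⟨f, hf⟩ = 0 :=
    LinearMap.ext_on_range (hφspan.trans hspan) fun i => by simp [← ht i, ev, hft]
  simpa using (Module.eval_apply_eq_zero_iff K _).1 heval

theorem Submodule.exists_interpolation :
    ∃ (k : ℕ) (t : Fin k → J) (q : Fin k → J → K), (∀ i, q i ∈ V) ∧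
      ∀ f ∈ V, ∀ s, f s = ∑ i, f (t i) * q i s := by
  obtain ⟨k, t, ht⟩ := V.exists_fin_eq_zero_of_forall_apply_eq_zero
  let Φ : V →ₗ[K] Fin k → K := LinearMap.pi fun i => (LinearMap.proj (t i)).comp V.subtype
  obtain ⟨Ψ, hΨ⟩ := Φ.exists_leftInverse_of_injective <| LinearMap.ker_eq_bot'.2 fun f hf =>
    Subtype.ext (ht f f.2 (congrFun hf))
  refine ⟨k, t, fun i => Ψ (Pi.single i 1), fun i => (Ψ _).2, fun f hf s => ?_⟩
  have hexpand : (⟨f, hf⟩ : V) = ∑ i, f (t i) • Ψ (Pi.single i 1) :=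
    calc (⟨f, hf⟩ : V) = Ψ (Φ ⟨f, hf⟩) := (LinearMap.congr_fun hΨ _).symm
      _ = ∑ i, f (t i) • Ψ (Pi.single i 1) := by
        rw [pi_eq_sum_univ' (Φ _), map_sum]
        simp [Φ]
  simpa [mul_comm] using congrFun (congrArg Subtype.val hexpand) s

end Interpolation

theorem vector_valued_polynomials_tensor_decomposition_general
    {J X : Type*} [AddCommSemigroup J] [TopologicalSpace J]
    [AddCommGroup X] [Module ℂ X] [TopologicalSpace X] [IsTopologicalAddGroup X]
    [ContinuousSMul ℂ X] [T2Space X]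
    [Module ℝ X] [IsScalarTower ℝ ℂ X] [LocallyConvexSpace ℝ X]
    (n : ℕ) (hfd : FiniteDimensional ℂ (polySpace J ℂ n))
    (p : J → X) (hp : IsPolyDeg n p) :
    ∃ (k : ℕ) (q : Fin k → J → ℂ) (x : Fin k → X),
      (∀ i, IsPolyDeg n (q i)) ∧ ∀ t : J, p t = ∑ i, q i t • x i := by
  obtain ⟨k, t, q, hq, hinterp⟩ := (polySpace J ℂ n).exists_interpolation
  have : SeparatingDual ℂ X := RCLike.separatingDual_of_locallyConvexSpace
  refine ⟨k, q, fun i => p (t i), hq, fun s =>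
    (SeparatingDual.eq_iff_forall_dual_eq (R := ℂ)).2 fun L => ?_⟩
  calc L (p s) = ∑ i, L (p (t i)) * q i s := hinterp _ (hp.comp L) s
    _ = L (∑ i, q i s • p (t i)) := by simp [mul_comm]

/-- if `J` is an abelian topological semigroup, `X` a Hausdorff locally
convex topological vector space over `ℂ`, and `P^n(J)` is finite dimensional, then
`P^n(J, X) = P^n(J) ⊗ X`: every `p ∈ P^n(J, X)` is a finite sum `∑ qᵢ(·) • xᵢ` with
`qᵢ ∈ P^n(J)` and `xᵢ ∈ X`. -/
theorem vector_valued_polynomials_tensor_decomposition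
    {J X : Type*} [AddCommSemigroup J] [TopologicalSpace J] [ContinuousAdd J]
    [AddCommGroup X] [Module ℂ X] [TopologicalSpace X] [IsTopologicalAddGroup X]
    [ContinuousSMul ℂ X] [T2Space X]
    [Module ℝ X] [IsScalarTower ℝ ℂ X] [LocallyConvexSpace ℝ X]
    (n : ℕ) (hfd : FiniteDimensional ℂ (polySpace J ℂ n))
    (p : J → X) (hp : IsPolyDeg n p) :
    ∃ (k : ℕ) (q : Fin k → J → ℂ) (x : Fin k → X),
      (∀ i, IsPolyDeg n (q i)) ∧ ∀ t : J, p t = ∑ i, q i t • x i :=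
  vector_valued_polynomials_tensor_decomposition_general n hfd p hp
end

section
/- Let G be a locally compact Hausdorff abelian topological group having an open subgroup G_0 that is topologically isomorphic to ℝ^m × K for some m ∈ ℕ and some compact abelian topological group K, and such that the quotient group G/G_0 is isomorphic to ℤ^k × F for some k ∈ ℕ and some torsion abelian group F. Then for each n ∈ ℕ the complex vector space P^n(G) is finite dimensional. -/
open scoped BigOperators

/-!
Along an orbit `j ↦ y + j • h`, a polynomial `p ∈ P^n(G)` is a polynomial sequence on `ℤ`: it
vanishes once it vanishes at `0, …, n`, and it is constant once it is bounded. The first fact,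
applied one generator at a time, makes `p` vanish on the subgroup generated by `g₁, …, g_r`, hence
on its closure, as soon as it vanishes on the grid `{∑ cᵢ • gᵢ : 0 ≤ cᵢ ≤ n}`. The second makes
every `h` with a nonzero multiple in a compact subgroup `C` a period of `p`. Taking for the `gᵢ`
lifts of a basis of `ℤ^k` and the vectors `eᵢ`, `√2 eᵢ` of `ℝ^m`, and `C = K`, every element of `G`
is a point of that closure plus such a period: `G/G₀` is `ℤ^k` up to torsion, `ℝ^m` is divisible,
and `ℤ + √2 ℤ` is dense in `ℝ`. So restriction to the finite grid is injective on `P^n(G)`.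
-/
open Set Function Bornology fwdDiff

section Sequences

variable {M : Type*} [AddCommMonoid M] {A : Type*} [AddCommGroup A]

theorem fwdDiff_eq_zero_iff_periodic {f : M → A} {h : M} : Δ_[h] f = 0 ↔ Periodic f h := by
  simp [funext_iff, fwdDiff, sub_eq_zero, Periodic]

theorem Int.eq_const_of_fwdDiff_eq_zero {u : ℤ → A} (hu : Δ_[1] u = 0) (j : ℤ) : u j = u 0 := by
  simpa using (fwdDiff_eq_zero_iff_periodic.1 hu).zsmul_eq j

theorem Int.eq_zero_of_fwdDiff_iter_eq_zero {n : ℕ} {u : ℤ → A} (hu : Δ_[1] ^[n + 1] u = 0)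
    (h0 : ∀ i : ℕ, i ≤ n → u i = 0) : u = 0 := by
  have hu0 : u 0 = 0 := by exact_mod_cast h0 0 (Nat.zero_le n)
  suffices Δ_[1] u = 0 from funext fun j => by rw [Int.eq_const_of_fwdDiff_eq_zero this, hu0]; rfl
  cases n with
  | zero => exact hu
  | succ n =>
    refine Int.eq_zero_of_fwdDiff_iter_eq_zero hu fun i hi => ?_
    have h1 : u (i + 1) = 0 := by exact_mod_cast h0 (i + 1) (by omega)
    simp [fwdDiff, h0 i (by omega), h1]

variable {E : Type*} [NormedAddCommGroup E]

theorem isBounded_range_fwdDiff {u : M → E} (hb : IsBounded (Set.range u)) (h : M) :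
    IsBounded (Set.range (Δ_[h] u)) := by
  obtain ⟨C, hC⟩ := isBounded_iff_forall_norm_le.1 hb
  refine isBounded_iff_forall_norm_le.2 ⟨C + C, forall_mem_range.2 fun x => ?_⟩
  exact (norm_sub_le _ _).trans (add_le_add (hC _ ⟨_, rfl⟩) (hC _ ⟨_, rfl⟩))

variable [NormedSpace ℝ E]

theorem Int.fwdDiff_eq_zero_of_fwdDiff_fwdDiff_eq_zero {u : ℤ → E} (hu : Δ_[1] (Δ_[1] u) = 0)
    (hb : IsBounded (Set.range u)) : Δ_[1] u = 0 := by
  set c := Δ_[1] u 0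
  have hstep : ∀ N : ℕ, u N = u 0 + N • c := by
    intro N
    induction N with
    | zero => simp
    | succ N ih =>
      have : u (N + 1) - u N = c := Int.eq_const_of_fwdDiff_eq_zero hu N
      rw [succ_nsmul, ← add_assoc, ← ih, ← this]; push_cast; abel
  obtain ⟨C, hC⟩ := isBounded_iff_forall_norm_le.1 hb
  have hc : c = 0 := by
    by_contra hc
    obtain ⟨N, hN⟩ := exists_nat_gt ((C + C) / ‖c‖)
    have hle : N * ‖c‖ ≤ C + C := calc
      N * ‖c‖ = ‖u N - u 0‖ := by rw [hstep, add_sub_cancel_left, RCLike.norm_nsmul ℝ, nsmul_eq_mul]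
      _ ≤ C + C := (norm_sub_le _ _).trans (add_le_add (hC _ ⟨_, rfl⟩) (hC _ ⟨_, rfl⟩))
    exact ((div_lt_iff₀ (norm_pos_iff.2 hc)).1 hN).not_ge hle
  funext j
  rw [Int.eq_const_of_fwdDiff_eq_zero hu j]
  exact hc

theorem Int.fwdDiff_eq_zero_of_isBounded_range {n : ℕ} {u : ℤ → E} (hu : Δ_[1] ^[n + 1] u = 0)
    (hb : IsBounded (Set.range u)) : Δ_[1] u = 0 := by
  induction n generalizing u with
  | zero => exact hu
  | succ n ih =>
    exact Int.fwdDiff_eq_zero_of_fwdDiff_fwdDiff_eq_zero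
      (ih hu (isBounded_range_fwdDiff hb 1)) hb

end Sequences

section Polynomials

variable {G : Type*} [AddCommGroup G] {A : Type*} [AddCommGroup A] {n : ℕ} {p : G → A}

theorem fwdDiff_iter_comp_add_zsmul (p : G → A) (y h : G) (k : ℕ) :
    Δ_[1] ^[k] (fun j : ℤ => p (y + j • h)) = fun j => Δ_[h] ^[k] p (y + j • h) := by
  funext j
  simp [fwdDiff_iter_eq_sum_shift, add_smul, add_assoc]

theorem apply_add_zsmul_eq_zero_of_forall_le (hp : ∀ h, Δ_[h] ^[n + 1] p = 0) (y h : G)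
    (h0 : ∀ i : ℕ, i ≤ n → p (y + (i : ℤ) • h) = 0) (j : ℤ) : p (y + j • h) = 0 :=
  congrFun (Int.eq_zero_of_fwdDiff_iter_eq_zero (u := fun j : ℤ => p (y + j • h))
    (by rw [fwdDiff_iter_comp_add_zsmul, hp]; rfl) h0) j

theorem apply_sum_zsmul_eq_zero_of_eq_zero_on_grid {ι : Type*} [Fintype ι]
    (hp : ∀ h, Δ_[h] ^[n + 1] p = 0) (g : ι → G)
    (hgrid : ∀ c : ι → ℕ, (∀ i, c i ≤ n) → p (∑ i, c i • g i) = 0) (c : ι → ℤ) :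
    p (∑ i, c i • g i) = 0 := by
  classical
  suffices ∀ s : Finset ι, ∀ c : ι → ℤ, (∀ i ∉ s, 0 ≤ c i ∧ c i ≤ n) → p (∑ i, c i • g i) = 0 from
    this Finset.univ c (by simp)
  intro s
  induction s using Finset.induction_on with
  | empty =>
    intro c hc
    convert hgrid (fun i => (c i).toNat) (fun i => by have := hc i (Finset.notMem_empty i); omega)
      using 3 with i
    rw [← natCast_zsmul, Int.toNat_of_nonneg (hc i (Finset.notMem_empty i)).1]
  | insert a s ha ih =>
    intro c hc
    have hsplit : ∀ j : ℤ, ∑ i, update c a j i • g i = ∑ i, update c a 0 i • g i + j • g a := by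
      intro j
      rw [Fintype.sum_eq_add_sum_compl a, Fintype.sum_eq_add_sum_compl a (fun i => _ • g i),
        update_self, update_self, zero_smul, zero_add, add_comm]
      refine congrArg (· + _) (Finset.sum_congr rfl fun i hi => ?_)
      have hia : i ≠ a := by simpa using hi
      rw [update_of_ne hia, update_of_ne hia]
    have hline := apply_add_zsmul_eq_zero_of_forall_le hp (∑ i, update c a 0 i • g i) (g a)
      fun i hi => by
        rw [← hsplit]
        refine ih _ fun x hx => ?_
        rcases eq_or_ne x a with rfl | hxa
        · simp only [update_self]; omega
        · simpa [hxa] using hc x (by simp [hxa, hx])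
    simpa [← hsplit] using hline (c a)

end Polynomials

section Periods

variable {G : Type*} [AddCommGroup G] {E : Type*} [NormedAddCommGroup E] [NormedSpace ℝ E]
  {n : ℕ} {p : G → E}

theorem periodic_of_isBounded_orbit (hp : ∀ h, Δ_[h] ^[n + 1] p = 0) {h : G}
    (hb : ∀ y, IsBounded (Set.range fun j : ℤ => p (y + j • h))) : Periodic p h := fun y => by
  have hΔ := Int.fwdDiff_eq_zero_of_isBounded_range
    (by rw [fwdDiff_iter_comp_add_zsmul, hp]; rfl) (hb y)
  simpa [fwdDiff, sub_eq_zero] using congrFun hΔ 0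

theorem Function.Periodic.of_nsmul (hp : ∀ h, Δ_[h] ^[n + 1] p = 0) {h : G} {d : ℕ} (hd : d ≠ 0)
    (hper : Periodic p (d • h)) : Periodic p h := by
  refine periodic_of_isBounded_orbit hp fun y => ?_
  have horbit : Periodic (fun j : ℤ => p (y + j • h)) d := fun j => by
    simpa [add_smul, add_assoc] using hper (y + j • h)
  refine ((Set.finite_Ico 0 (d : ℤ)).image fun j : ℤ => p (y + j • h)).isBounded.subset
    (forall_mem_range.2 fun j => ?_)
  obtain ⟨i, hi, hji⟩ := horbit.exists_mem_Ico₀ (by omega) j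
  exact ⟨i, hi, hji.symm⟩

variable [TopologicalSpace G] [ContinuousAdd G]

theorem periodic_of_mem_compact_addSubgroup (hpc : Continuous p) (hp : ∀ h, Δ_[h] ^[n + 1] p = 0)
    {C : AddSubgroup G} (hC : IsCompact (C : Set G)) {h : G} (hh : h ∈ C) : Periodic p h :=
  periodic_of_isBounded_orbit hp fun y =>
    (hC.image (hpc.comp (continuous_const_add y))).isBounded.subset
      (range_subset_iff.2 fun j => ⟨j • h, C.zsmul_mem hh j, rfl⟩)

end Periods

section FiniteDimensional

variable {G : Type*} [AddCommGroup G] [TopologicalSpace G] [IsTopologicalAddGroup G]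

theorem eq_zero_of_eq_zero_on_grid_of_forall_nsmul_sub_mem {E : Type*} [NormedAddCommGroup E]
    [NormedSpace ℝ E] {n : ℕ} {p : G → E} (hpc : Continuous p) (hp : ∀ h, Δ_[h] ^[n + 1] p = 0)
    {C : AddSubgroup G} (hC : IsCompact (C : Set G)) {ι : Type*} [Fintype ι] (g : ι → G)
    (hcover : ∀ t, ∃ c ∈ (AddSubgroup.closure (Set.range g)).topologicalClosure,
      ∃ d : ℕ, d ≠ 0 ∧ d • (t - c) ∈ C)
    (hgrid : ∀ c : ι → ℕ, (∀ i, c i ≤ n) → p (∑ i, c i • g i) = 0) : p = 0 := by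
  have hspan : ∀ x ∈ AddSubgroup.closure (Set.range g), p x = 0 := by
    intro x hx
    obtain ⟨c, rfl⟩ := AddSubgroup.mem_closure_range_iff_of_fintype.1 hx
    exact apply_sum_zsmul_eq_zero_of_eq_zero_on_grid hp g hgrid c
  have hclosure : ∀ x ∈ (AddSubgroup.closure (Set.range g)).topologicalClosure, p x = 0 :=
    closure_minimal hspan (isClosed_singleton.preimage hpc)
  funext t
  obtain ⟨c, hc, d, hd, hdC⟩ := hcover t
  have := (periodic_of_mem_compact_addSubgroup hpc hp hC hdC).of_nsmul hp hd c
  rw [add_sub_cancel] at this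
  rw [Pi.zero_apply, this, hclosure c hc]

theorem finiteDimensional_polySpace_of_forall_nsmul_sub_mem {C : AddSubgroup G}
    (hC : IsCompact (C : Set G)) {s : Set G} (hs : s.Finite)
    (hcover : ∀ t, ∃ c ∈ (AddSubgroup.closure s).topologicalClosure,
      ∃ d : ℕ, d ≠ 0 ∧ d • (t - c) ∈ C) (n : ℕ) :
    FiniteDimensional ℂ (polySpace G ℂ n) := by
  obtain ⟨r, g, rfl⟩ := hs.fin_embedding
  let evalGrid : polySpace G ℂ n →ₗ[ℂ] (Fin r → Fin (n + 1)) → ℂ :=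
    LinearMap.pi fun c => (LinearMap.proj (∑ i, (c i : ℕ) • g i)).comp (polySpace G ℂ n).subtype
  refine Module.Finite.of_injective evalGrid
    ((injective_iff_map_eq_zero evalGrid).2 fun q hq => ?_)
  -- `IsPolyDeg` is phrased with `delta`, which unfolds to `fwdDiff`
  obtain ⟨hqc, hqΔ⟩ := q.2
  refine Subtype.ext (eq_zero_of_eq_zero_on_grid_of_forall_nsmul_sub_mem hqc hqΔ hC g hcover
    fun c hc => ?_)
  simpa [evalGrid] using congrFun hq fun i => ⟨c i, Nat.lt_succ_of_le (hc i)⟩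

end FiniteDimensional

theorem exists_nsmul_sub_mem_of_quotientEquiv {G F : Type*} [AddCommGroup G] [AddCommGroup F]
    {H : AddSubgroup G} {k : ℕ} (e' : G ⧸ H ≃+ (Fin k → ℤ) × F)
    (htor : ∀ f : F, IsOfFinAddOrder f) :
    ∃ x : Fin k → G, ∀ t, ∃ a ∈ AddSubgroup.closure (Set.range x),
      ∃ d : ℕ, d ≠ 0 ∧ d • (t - a) ∈ H := by
  set q : G →+ (Fin k → ℤ) × F := e'.toAddMonoidHom.comp (QuotientAddGroup.mk' H)
  have hq : ∀ y, q y = 0 ↔ y ∈ H := fun y => by simp [q, QuotientAddGroup.eq_zero_iff]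
  have hqs : Function.Surjective q := e'.surjective.comp QuotientAddGroup.mk_surjective
  choose x hx using fun l => hqs (Pi.single l 1, 0)
  refine ⟨x, fun t => ?_⟩
  have hlift : q (∑ l, (q t).1 l • x l) = ((q t).1, 0) := by
    simp only [map_sum, map_zsmul, hx]
    ext i <;> simp [Prod.fst_sum, Prod.snd_sum, Finset.sum_apply, Pi.single_apply]
  refine ⟨∑ l, (q t).1 l • x l,
    AddSubgroup.sum_mem _ fun l _ =>
      AddSubgroup.zsmul_mem _ (AddSubgroup.subset_closure (Set.mem_range_self l)) _,
    addOrderOf (q t).2, (htor _).addOrderOf_pos.ne', (hq _).1 ?_⟩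
  rw [map_nsmul, map_sub, hlift]
  ext <;> simp

theorem dense_addSubgroupClosure_iUnion_single {ι A : Type*} [Finite ι] [DecidableEq ι]
    [AddCommGroup A] [TopologicalSpace A] {T : Set A} (hT : Dense (AddSubgroup.closure T : Set A)) :
    Dense ((AddSubgroup.closure (⋃ i, Pi.single i '' T : Set (ι → A))) : Set (ι → A)) := by
  have hpi : AddSubgroup.pi univ (fun _ : ι => AddSubgroup.closure T) ≤
      AddSubgroup.closure (⋃ i, Pi.single i '' T : Set (ι → A)) :=
    AddSubgroup.pi_le_iff.2 fun i => by
      rw [AddMonoidHom.map_closure]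
      exact AddSubgroup.closure_mono (subset_iUnion_of_subset i subset_rfl)
  exact (dense_pi univ fun _ _ => hT).mono hpi

theorem dense_addSubgroupClosure_sqrt_two_one :
    Dense (AddSubgroup.closure {√2, 1} : Set ℝ) :=
  dense_addSubgroupClosure_pair_iff.2 (by simpa using irrational_sqrt_two)

theorem exists_finite_forall_nsmul_sub_mem_of_structure
    {G : Type*} [AddCommGroup G] [TopologicalSpace G] [IsTopologicalAddGroup G]
    (G₀ : AddSubgroup G) {m : ℕ} {K : Type*} [AddCommGroup K] [TopologicalSpace K]
    [CompactSpace K] (e : G₀ ≃+ ((Fin m → ℝ) × K)) (he' : Continuous e.symm)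
    {k : ℕ} {F : Type*} [AddCommGroup F] (htor : ∀ x : F, IsOfFinAddOrder x)
    (e' : (G ⧸ G₀) ≃+ ((Fin k → ℤ) × F)) :
    ∃ C : AddSubgroup G, IsCompact (C : Set G) ∧ ∃ s : Set G, s.Finite ∧
      ∀ t, ∃ c ∈ (AddSubgroup.closure s).topologicalClosure, ∃ d : ℕ, d ≠ 0 ∧ d • (t - c) ∈ C := by
  let φ : (Fin m → ℝ) × K →+ G := G₀.subtype.comp e.symm.toAddMonoidHom
  have hφ : Continuous φ := continuous_subtype_val.comp he'
  let T : Set (Fin m → ℝ) := ⋃ i, Pi.single i '' {√2, 1}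
  obtain ⟨x, hx⟩ := exists_nsmul_sub_mem_of_quotientEquiv e' htor
  let s : Set G := (φ.comp (AddMonoidHom.inl _ _)) '' T ∪ Set.range x
  have hs : s.Finite :=
    ((finite_iUnion fun _ => (Set.toFinite _).image _).image _).union (finite_range x)
  have hreal : ∀ v, φ (v, 0) ∈ (AddSubgroup.closure s).topologicalClosure := by
    have hmap : (AddSubgroup.closure T).map (φ.comp (AddMonoidHom.inl _ _)) ≤
        AddSubgroup.closure s := by
      rw [AddMonoidHom.map_closure]
      exact AddSubgroup.closure_mono subset_union_left
    intro v
    rw [← SetLike.mem_coe, AddSubgroup.topologicalClosure_coe]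
    exact map_mem_closure (f := fun w => φ (w, 0))
      (hφ.comp (continuous_id.prodMk continuous_const))
      (dense_addSubgroupClosure_iUnion_single dense_addSubgroupClosure_sqrt_two_one v)
      fun w hw => hmap ⟨w, hw, rfl⟩
  refine ⟨(φ.comp (AddMonoidHom.inr _ _)).range,
    isCompact_range (hφ.comp (continuous_const.prodMk continuous_id)), s, hs, fun t => ?_⟩
  obtain ⟨a, ha, d, hd, hdG₀⟩ := hx t
  set y := e ⟨_, hdG₀⟩
  refine ⟨a + φ ((d : ℝ)⁻¹ • y.1, 0),
    add_mem (AddSubgroup.le_topologicalClosure _ (AddSubgroup.closure_mono subset_union_right ha))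
      (hreal _), d, hd, y.2, ?_⟩
  have hy : φ y = d • (t - a) := by simp [φ, y]
  have hdy : d • (((d : ℝ)⁻¹ • y.1, 0) : (Fin m → ℝ) × K) = (y.1, 0) := by
    ext i <;> simp [hd]
  calc φ (0, y.2) = φ (y - d • ((d : ℝ)⁻¹ • y.1, 0)) := by rw [hdy]; congr 1; ext <;> simp
    _ = d • (t - (a + φ ((d : ℝ)⁻¹ • y.1, 0))) := by
      rw [map_sub, map_nsmul, hy, ← smul_sub, sub_sub]

theorem polynomials_finite_dimensional_of_structure_general
    {G : Type*} [AddCommGroup G] [TopologicalSpace G] [IsTopologicalAddGroup G]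
    (G₀ : AddSubgroup G)
    (m : ℕ) (K : Type) [AddCommGroup K] [TopologicalSpace K]
    [CompactSpace K]
    (e : G₀ ≃+ ((Fin m → ℝ) × K)) (he' : Continuous e.symm)
    (k : ℕ) (F : Type) [AddCommGroup F] (htor : ∀ x : F, IsOfFinAddOrder x)
    (e' : (G ⧸ G₀) ≃+ ((Fin k → ℤ) × F)) :
    ∀ n : ℕ, FiniteDimensional ℂ (polySpace G ℂ n) := by
  obtain ⟨C, hC, s, hs, hcover⟩ :=
    exists_finite_forall_nsmul_sub_mem_of_structure G₀ e he' htor e'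
  exact finiteDimensional_polySpace_of_forall_nsmul_sub_mem hC hs hcover

/-- let `G` be a locally compact Hausdorff abelian group with an open
subgroup `G₀` topologically isomorphic to `ℝ^m × K` (`K` compact abelian) such that
`G/G₀ ≅ ℤ^k × F` with `F` a torsion abelian group. Then `P^n(G)` is finite dimensional
for each `n ∈ ℕ`. -/
theorem polynomials_finite_dimensional_of_structure
    {G : Type*} [AddCommGroup G] [TopologicalSpace G] [IsTopologicalAddGroup G]
    [LocallyCompactSpace G] [T2Space G]
    (G₀ : AddSubgroup G) (hopen : IsOpen (G₀ : Set G))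
    (m : ℕ) (K : Type) [AddCommGroup K] [TopologicalSpace K] [IsTopologicalAddGroup K]
    [CompactSpace K]
    (e : G₀ ≃+ ((Fin m → ℝ) × K)) (he : Continuous e) (he' : Continuous e.symm)
    (k : ℕ) (F : Type) [AddCommGroup F] (htor : ∀ x : F, IsOfFinAddOrder x)
    (e' : (G ⧸ G₀) ≃+ ((Fin k → ℤ) × F)) :
    ∀ n : ℕ, FiniteDimensional ℂ (polySpace G ℂ n) :=
  polynomials_finite_dimensional_of_structure_general G₀ m K e he' k F htor e'
end
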